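/- Let i and j be adjacent vertices of a finite connected simple graph with d_i ≥ d_j, and let N̄(v) = N(v) ∪ {v} denote the closed neighborhood of a vertex v. Then the number of vertices in N̄(i) that are not in N̄(j) satisfies |N̄(i) \ N̄(j)| ≤ d_i · (1 − κ(i,j)). -/

import Mathlib

open Finset

/-- The probability measure at node `i`: uniform on the neighbors of `i`. -/
noncomputable def massDist {V : Type*} [Fintype V] (G : SimpleGraph V)
    [DecidableRel G.Adj] (i u : V) : ℝ :=
  if G.Adj i u then 1 / (G.degree i : ℝ) else 0

/-- `Γ` is a coupling of the measures `massDist G i` and `massDist G j`. -/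
def IsCoupling {V : Type*} [Fintype V] (G : SimpleGraph V) [DecidableRel G.Adj]
    (i j : V) (Γ : V → V → ℝ) : Prop :=
  (∀ u v, 0 ≤ Γ u v) ∧
  (∀ u, ∑ v, Γ u v = massDist G i u) ∧
  (∀ v, ∑ u, Γ u v = massDist G j v)

/-- The L¹-Wasserstein distance between the neighborhood measures of `i` and `j`,
with respect to the shortest-path distance. -/
noncomputable def wassersteinW1 {V : Type*} [Fintype V] (G : SimpleGraph V)
    [DecidableRel G.Adj] (i j : V) : ℝ :=
  sInf { c : ℝ | ∃ Γ : V → V → ℝ, IsCoupling G i j Γ ∧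
    c = ∑ u, ∑ v, Γ u v * (G.dist u v : ℝ) }

/-- The Ollivier–Ricci curvature of the edge `{i, j}` (for adjacent `i`, `j`,
so that `d(i,j) = 1`). -/
noncomputable def ollivierRicci {V : Type*} [Fintype V] (G : SimpleGraph V)
    [DecidableRel G.Adj] (i j : V) : ℝ :=
  1 - wassersteinW1 G i j

/-! Every neighbour `u` of `i` outside `N̄(j)` carries mass `1/dᵢ` under `mᵢ`, and any coupling
must move that mass onto `N(j)`, which does not contain `u`; since `u` and `N(j)` are joined
through the edge `ij`, each unit travels distance at least `1`. Summing over such `u` bounds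
every transport cost, hence `W₁(i,j) = 1 - κ(i,j)`, from below by `|N̄(i) \ N̄(j)| / dᵢ`. -/

theorem SimpleGraph.Adj.one_le_dist_of_adj_of_adj {V : Type*} {G : SimpleGraph V} {i j u v : V}
    (hij : G.Adj i j) (hiu : G.Adj i u) (hjv : G.Adj j v) (huv : u ≠ v) : 1 ≤ G.dist u v :=
  (hiu.symm.reachable.trans (hij.reachable.trans hjv.reachable)).pos_dist_of_ne huv

section Coupling

variable {V : Type*} [Fintype V] (G : SimpleGraph V) [DecidableRel G.Adj]

noncomputable def transportCost (Γ : V → V → ℝ) : ℝ :=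
  ∑ u, ∑ v, Γ u v * (G.dist u v : ℝ)

theorem massDist_nonneg (i u : V) : 0 ≤ massDist G i u := by
  unfold massDist
  split_ifs <;> positivity

theorem massDist_of_adj {i u : V} (h : G.Adj i u) : massDist G i u = 1 / G.degree i :=
  if_pos h

theorem massDist_of_not_adj {i u : V} (h : ¬G.Adj i u) : massDist G i u = 0 :=
  if_neg h

theorem sum_massDist_of_subset_neighborFinset {i : V} {S : Finset V}
    (hS : S ⊆ G.neighborFinset i) : ∑ u ∈ S, massDist G i u = S.card / G.degree i := by
  rw [sum_congr rfl fun u hu => massDist_of_adj G ((G.mem_neighborFinset i u).1 (hS hu)),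
    sum_const, nsmul_eq_mul, mul_one_div]

theorem sum_massDist {i : V} (hi : 0 < G.degree i) : ∑ u, massDist G i u = 1 := by
  rw [← sum_subset (subset_univ (G.neighborFinset i)) fun u _ hu =>
      massDist_of_not_adj G ((G.mem_neighborFinset i u).not.1 hu),
    sum_massDist_of_subset_neighborFinset G subset_rfl, G.card_neighborFinset_eq_degree]
  exact div_self (by positivity)

theorem isCoupling_mul_massDist {i j : V} (hi : 0 < G.degree i) (hj : 0 < G.degree j) :
    IsCoupling G i j fun u v => massDist G i u * massDist G j v :=
  ⟨fun u v => mul_nonneg (massDist_nonneg G i u) (massDist_nonneg G j v),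
    fun u => by rw [← mul_sum, sum_massDist G hj, mul_one],
    fun v => by rw [← sum_mul, sum_massDist G hi, one_mul]⟩

variable {G}

theorem le_wassersteinW1 {i j : V} (hi : 0 < G.degree i) (hj : 0 < G.degree j) {c : ℝ}
    (h : ∀ Γ, IsCoupling G i j Γ → c ≤ transportCost G Γ) : c ≤ wassersteinW1 G i j :=
  le_csInf ⟨_, _, isCoupling_mul_massDist G hi hj, rfl⟩ fun _ ⟨Γ, hΓ, hc⟩ => hc ▸ h Γ hΓ

namespace IsCoupling

variable {i j : V} {Γ : V → V → ℝ}

theorem eq_zero_of_not_adj (hΓ : IsCoupling G i j Γ) {v : V} (hv : ¬G.Adj j v) (u : V) :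
    Γ u v = 0 := by
  have hcol : ∑ w, Γ w v = 0 := by rw [hΓ.2.2 v, massDist_of_not_adj G hv]
  exact (sum_eq_zero_iff_of_nonneg fun w _ => hΓ.1 w v).1 hcol u (mem_univ u)

theorem massDist_le_sum_mul_dist (hΓ : IsCoupling G i j Γ) {u : V}
    (hu : ∀ v, G.Adj j v → 1 ≤ G.dist u v) :
    massDist G i u ≤ ∑ v, Γ u v * (G.dist u v : ℝ) := by
  rw [← hΓ.2.1 u]
  refine sum_le_sum fun v _ => ?_
  by_cases hv : G.Adj j v
  · exact le_mul_of_one_le_right (hΓ.1 u v) (by exact_mod_cast hu v hv)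
  · rw [hΓ.eq_zero_of_not_adj hv, zero_mul]

theorem sum_massDist_le_transportCost (hΓ : IsCoupling G i j Γ) {S : Finset V}
    (hS : ∀ u ∈ S, ∀ v, G.Adj j v → 1 ≤ G.dist u v) :
    ∑ u ∈ S, massDist G i u ≤ transportCost G Γ :=
  calc ∑ u ∈ S, massDist G i u ≤ ∑ u ∈ S, ∑ v, Γ u v * (G.dist u v : ℝ) :=
        sum_le_sum fun u hu => hΓ.massDist_le_sum_mul_dist (hS u hu)
    _ ≤ transportCost G Γ :=
        sum_le_sum_of_subset_of_nonneg (subset_univ S) fun u _ _ =>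
          sum_nonneg fun v _ => mul_nonneg (hΓ.1 u v) (Nat.cast_nonneg _)

end IsCoupling

end Coupling

theorem card_closedNeighborhood_sdiff_le_general
    {V : Type*} [Fintype V] [DecidableEq V] (G : SimpleGraph V) [DecidableRel G.Adj]
    (i j : V) (hij : G.Adj i j) :
    ((insert i (G.neighborFinset i) \ insert j (G.neighborFinset j)).card : ℝ) ≤
      (G.degree i : ℝ) * (1 - ollivierRicci G i j) := by
  set S := insert i (G.neighborFinset i) \ insert j (G.neighborFinset j)
  have hi : 0 < G.degree i := G.degree_pos_iff_exists_adj i |>.2 ⟨j, hij⟩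
  have hj : 0 < G.degree j := G.degree_pos_iff_exists_adj j |>.2 ⟨i, hij.symm⟩
  have hS_adj : ∀ u ∈ S, G.Adj i u ∧ ¬G.Adj j u := fun u hu => by
    simp only [S, mem_sdiff, mem_insert, SimpleGraph.mem_neighborFinset, not_or] at hu
    obtain ⟨hi | hiu, -, hju⟩ := hu
    · exact absurd (hi ▸ hij.symm) hju
    · exact ⟨hiu, hju⟩
  have hS_far : ∀ u ∈ S, ∀ v, G.Adj j v → 1 ≤ G.dist u v := fun u hu v hjv =>
    hij.one_le_dist_of_adj_of_adj (hS_adj u hu).1 hjv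
      (by rintro rfl; exact (hS_adj u hu).2 hjv)
  have hmass : ∑ u ∈ S, massDist G i u = S.card / G.degree i :=
    sum_massDist_of_subset_neighborFinset G fun u hu =>
      (G.mem_neighborFinset i u).2 (hS_adj u hu).1
  have hW : (S.card : ℝ) / G.degree i ≤ wassersteinW1 G i j :=
    le_wassersteinW1 hi hj fun Γ hΓ => hmass ▸ hΓ.sum_massDist_le_transportCost hS_far
  rw [ollivierRicci, sub_sub_cancel, mul_comm, ← div_le_iff₀ (by exact_mod_cast hi)]
  exact hW

/-- The number of vertices in the closed neighborhood of `i` that are not in the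
closed neighborhood of `j` is bounded by `dᵢ (1 - κ(i,j))`. -/
theorem card_closedNeighborhood_sdiff_le
    {V : Type*} [Fintype V] [DecidableEq V] (G : SimpleGraph V) [DecidableRel G.Adj]
    (hconn : G.Connected) (hdeg : ∀ v : V, 1 ≤ G.degree v)
    (i j : V) (hij : G.Adj i j) (hdij : G.degree j ≤ G.degree i) :
    ((insert i (G.neighborFinset i) \ insert j (G.neighborFinset j)).card : ℝ) ≤
      (G.degree i : ℝ) * (1 - ollivierRicci G i j) :=
  card_closedNeighborhood_sdiff_le_general G i j hij
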